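/- arXiv:1603.07559 — 3 statements merged into one kernel-verified Lean document; each statement's English description precedes it below -/
import Mathlib

section
/- Let b ≥ 1, d = 2^b, and index the d-dimensional Pauli matrices B_1 = I_d, B_2, …, B_{d²}. Let δ_2, …, δ_{d²} be independent real-valued random variables with finite second moments. Then E‖ Σ_{j=2}^{d²} δ_j B_j ‖₂² ≤ Σ_{j=2}^{d²} E[δ_j²] + ( Σ_{j=2}^{d²} E[|δ_j|] )² − Σ_{j=2}^{d²} ( E[|δ_j|] )², where ‖·‖₂ denotes the spectral (operator) norm. -/
open MeasureTheory ProbabilityTheory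

/-- The four 2×2 Pauli matrices: σ₀ = I₂, σ₁, σ₂, σ₃. -/
noncomputable def pauli2 : Fin 4 → Matrix (Fin 2) (Fin 2) ℂ :=
  ![!![1, 0; 0, 1], !![0, 1; 1, 0], !![0, -Complex.I; Complex.I, 0], !![1, 0; 0, -1]]

/-- The `d = 2^b`-dimensional Pauli matrix `σ_{ℓ 1} ⊗ σ_{ℓ 2} ⊗ ⋯ ⊗ σ_{ℓ b}`. -/
noncomputable def PauliTensor {b : ℕ} (ℓ : Fin b → Fin 4) :
    Matrix (Fin b → Fin 2) (Fin b → Fin 2) ℂ :=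
  Matrix.of fun x y => ∏ i, pauli2 (ℓ i) (x i) (y i)

/-- The spectral (operator) norm of a square complex matrix. -/
noncomputable def specNorm {n : Type*} [Fintype n] [DecidableEq n]
    (A : Matrix n n ℂ) : ℝ :=
  ‖Matrix.toEuclideanCLM (𝕜 := ℂ) (n := n) A‖

/-!
Each Pauli matrix is a Kronecker product of unitary `2 × 2` matrices, hence unitary, so it has
spectral norm `1` and the triangle inequality gives `‖∑ δ_j B_j‖₂ ≤ ∑ |δ_j|`. The second moment
of the right-hand side is computed exactly from independence of the `Y_j = |δ_j|`:
`E (∑ Y_j)² = Var (∑ Y_j) + (∑ E Y_j)² = ∑ (E Y_j² - (E Y_j)²) + (∑ E Y_j)²`.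
-/

namespace Matrix

variable {ι m n p R : Type*}

def piKronecker [Fintype ι] [CommMonoid R] (A : ι → Matrix m n R) : Matrix (ι → m) (ι → n) R :=
  of fun x y => ∏ i, A i (x i) (y i)

theorem piKronecker_apply [Fintype ι] [CommMonoid R] (A : ι → Matrix m n R) (x : ι → m)
    (y : ι → n) :
    piKronecker A x y = ∏ i, A i (x i) (y i) := rfl

theorem piKronecker_mul [Fintype ι] [DecidableEq ι] [Fintype n] [CommSemiring R]
    (A : ι → Matrix m n R) (B : ι → Matrix n p R) :
    piKronecker A * piKronecker B = piKronecker fun i => A i * B i := by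
  ext x y
  simp only [mul_apply, piKronecker_apply, Finset.prod_univ_sum, Fintype.piFinset_univ,
    Finset.prod_mul_distrib]

theorem piKronecker_one [Fintype ι] [DecidableEq m] [CommMonoidWithZero R] :
    piKronecker (fun _ : ι => (1 : Matrix m m R)) = 1 := by
  ext x y
  rw [piKronecker_apply]
  by_cases hxy : x = y
  · subst hxy
    simp
  · obtain ⟨i, hi⟩ := Function.ne_iff.mp hxy
    rw [one_apply_ne hxy]
    exact Finset.prod_eq_zero (Finset.mem_univ i) (one_apply_ne hi)

theorem piKronecker_conjTranspose [Fintype ι] [CommSemiring R] [StarRing R]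
    (A : ι → Matrix m n R) : (piKronecker A)ᴴ = piKronecker fun i => (A i)ᴴ := by
  ext x y
  simp [piKronecker_apply, conjTranspose_apply, star_prod]

theorem piKronecker_mem_unitaryGroup [Fintype ι] [DecidableEq ι] [Fintype n] [DecidableEq n]
    [CommRing R] [StarRing R] {U : ι → Matrix n n R} (hU : ∀ i, U i ∈ unitaryGroup n R) :
    piKronecker U ∈ unitaryGroup (ι → n) R := by
  rw [mem_unitaryGroup_iff', star_eq_conjTranspose, piKronecker_conjTranspose, piKronecker_mul]
  simp_rw [← star_eq_conjTranspose, fun i => mem_unitaryGroup_iff'.mp (hU i)]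
  exact piKronecker_one

end Matrix

open Matrix

theorem pauli2_mem_unitaryGroup (k : Fin 4) : pauli2 k ∈ unitaryGroup (Fin 2) ℂ := by
  rw [mem_unitaryGroup_iff']
  fin_cases k <;> ext i j <;> fin_cases i <;> fin_cases j <;>
    simp [pauli2, mul_apply, Fin.sum_univ_two, one_apply, star_apply]

theorem PauliTensor_eq_piKronecker {b : ℕ} (ℓ : Fin b → Fin 4) :
    PauliTensor ℓ = piKronecker fun i => pauli2 (ℓ i) := rfl

theorem PauliTensor_mem_unitaryGroup {b : ℕ} (ℓ : Fin b → Fin 4) :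
    PauliTensor ℓ ∈ unitaryGroup (Fin b → Fin 2) ℂ := by
  rw [PauliTensor_eq_piKronecker]
  exact piKronecker_mem_unitaryGroup fun i => pauli2_mem_unitaryGroup (ℓ i)

section specNorm

open scoped Matrix.Norms.L2Operator

variable {n ι : Type*} [Fintype n] [DecidableEq n]

theorem specNorm_eq_norm (A : Matrix n n ℂ) : specNorm A = ‖A‖ := rfl

theorem specNorm_sum_smul_unitary_le [Nonempty n] [Fintype ι] (c : ι → ℝ)
    {U : ι → Matrix n n ℂ} (hU : ∀ j, U j ∈ unitaryGroup n ℂ) :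
    specNorm (∑ j, (c j : ℂ) • U j) ≤ ∑ j, |c j| := by
  rw [specNorm_eq_norm]
  refine (norm_sum_le _ _).trans_eq (Finset.sum_congr rfl fun j _ => ?_)
  rw [norm_smul, CStarRing.norm_of_mem_unitary (hU j), Complex.norm_real, Real.norm_eq_abs,
    mul_one]

end specNorm

theorem integral_sq_sum_of_pairwise_indepFun {Ω ι : Type*} [MeasurableSpace Ω] {μ : Measure Ω}
    [IsProbabilityMeasure μ] [Fintype ι] {Y : ι → Ω → ℝ} (hY : ∀ i, MemLp (Y i) 2 μ)
    (hindep : Pairwise fun i j => Y i ⟂ᵢ[μ] Y j) :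
    ∫ ω, (∑ i, Y i ω) ^ 2 ∂μ
      = ∑ i, ∫ ω, Y i ω ^ 2 ∂μ + (∑ i, ∫ ω, Y i ω ∂μ) ^ 2 - ∑ i, (∫ ω, Y i ω ∂μ) ^ 2 := by
  have hsum : MemLp (∑ i, Y i) 2 μ := memLp_finsetSum' _ fun i _ => hY i
  have hvar := IndepFun.variance_sum (s := Finset.univ) (fun i _ => hY i)
    fun i _ j _ hij => hindep hij
  rw [variance_eq_sub hsum] at hvar
  simp_rw [fun i => variance_eq_sub (hY i)] at hvar
  simp only [Pi.pow_apply, Finset.sum_apply, Finset.sum_sub_distrib,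
    integral_finsetSum _ fun i _ => (hY i).integrable one_le_two] at hvar
  linarith

theorem integral_sq_sum_abs_of_pairwise_indepFun {Ω ι : Type*} [MeasurableSpace Ω]
    {μ : Measure Ω} [IsProbabilityMeasure μ] [Fintype ι] {X : ι → Ω → ℝ}
    (hX : ∀ i, MemLp (X i) 2 μ) (hindep : Pairwise fun i j => X i ⟂ᵢ[μ] X j) :
    ∫ ω, (∑ i, |X i ω|) ^ 2 ∂μ
      = ∑ i, ∫ ω, X i ω ^ 2 ∂μ + (∑ i, ∫ ω, |X i ω| ∂μ) ^ 2 - ∑ i, (∫ ω, |X i ω| ∂μ) ^ 2 := by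
  simpa only [sq_abs] using integral_sq_sum_of_pairwise_indepFun (Y := fun i ω => |X i ω|)
    (fun i => (hX i).abs)
    fun i j hij => (hindep hij).comp measurable_abs measurable_abs

theorem pauli_random_combination_spectral_moment_general (b : ℕ)
    {Ω : Type*} [MeasureSpace Ω] (hprob : IsProbabilityMeasure (volume : Measure Ω))
    (δ : {ℓ : Fin b → Fin 4 // ℓ ≠ fun _ => 0} → Ω → ℝ)
    (hindep : iIndepFun δ (volume : Measure Ω))
    (hL2 : ∀ j, MemLp (δ j) 2 (volume : Measure Ω)) :
    (∫ ω, (specNorm (∑ j : {ℓ : Fin b → Fin 4 // ℓ ≠ fun _ => 0},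
          ((δ j ω : ℝ) : ℂ) • PauliTensor j.1)) ^ 2)
      ≤ (∑ j : {ℓ : Fin b → Fin 4 // ℓ ≠ fun _ => 0}, ∫ ω, (δ j ω) ^ 2) +
        (∑ j : {ℓ : Fin b → Fin 4 // ℓ ≠ fun _ => 0}, ∫ ω, |δ j ω|) ^ 2 -
        ∑ j : {ℓ : Fin b → Fin 4 // ℓ ≠ fun _ => 0}, (∫ ω, |δ j ω|) ^ 2 := by
  rw [← integral_sq_sum_abs_of_pairwise_indepFun hL2 fun i j hij => hindep.indepFun hij]
  have hsq : Integrable (fun ω => (∑ j, |δ j ω|) ^ 2) := by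
    simpa using (memLp_finsetSum' _ fun j _ => (hL2 j).abs).integrable_sq
  refine integral_mono_of_nonneg (ae_of_all _ fun ω => sq_nonneg _) hsq (ae_of_all _ fun ω => ?_)
  exact pow_le_pow_left₀ (norm_nonneg _)
    (specNorm_sum_smul_unitary_le (fun j => δ j ω) fun j => PauliTensor_mem_unitaryGroup j.1) 2

/-- if `δ_j`, `j = 2, …, d²` (indexed by the non-identity Pauli
multi-indices), are independent real random variables with finite second moments,
then `E‖Σ_j δ_j B_j‖₂² ≤ Σ_j E[δ_j²] + (Σ_j E|δ_j|)² − Σ_j (E|δ_j|)²`. -/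
theorem pauli_random_combination_spectral_moment (b : ℕ) (hb : 1 ≤ b)
    {Ω : Type*} [MeasureSpace Ω] (hprob : IsProbabilityMeasure (volume : Measure Ω))
    (δ : {ℓ : Fin b → Fin 4 // ℓ ≠ fun _ => 0} → Ω → ℝ)
    (hmeas : ∀ j, Measurable (δ j))
    (hindep : iIndepFun δ (volume : Measure Ω))
    (hL2 : ∀ j, MemLp (δ j) 2 (volume : Measure Ω)) :
    (∫ ω, (specNorm (∑ j : {ℓ : Fin b → Fin 4 // ℓ ≠ fun _ => 0},
          ((δ j ω : ℝ) : ℂ) • PauliTensor j.1)) ^ 2)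
      ≤ (∑ j : {ℓ : Fin b → Fin 4 // ℓ ≠ fun _ => 0}, ∫ ω, (δ j ω) ^ 2) +
        (∑ j : {ℓ : Fin b → Fin 4 // ℓ ≠ fun _ => 0}, ∫ ω, |δ j ω|) ^ 2 -
        ∑ j : {ℓ : Fin b → Fin 4 // ℓ ≠ fun _ => 0}, (∫ ω, |δ j ω|) ^ 2 :=
  pauli_random_combination_spectral_moment_general b hprob δ hindep hL2
end

section
/- Fix constants 0 ≤ q < 1, ħ > 1, c₀ > 0 and c₁ < 1. There exist constants C₁, C₂ > 0 and n₀ (depending only on q, ħ, c₀, c₁) such that the following holds for all n ≥ n₀ and all d = 2^b with n^{c₀} ≤ d ≤ exp(n^{c₁}): if β_2, …, β_{d²} ∈ [−1, 1] satisfy Σ_{j=2}^{d²} |β_j|^q ≤ π_n(d), if N_2, …, N_{d²} are independent with n(N_j + 1)/2 ~ Binomial(n, (1 + β_j)/2), and if β̂_j = N_j · 1(|N_j| ≥ ϖ) with threshold ϖ = ħ √((4/n) log d), then Σ_{j=2}^{d²} E|β̂_j − β_j| ≤ C₁ π_n(d) ϖ^{1−q} and Σ_{j=2}^{d²} E[|β̂_j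 − β_j|²] ≤ C₂ π_n(d) ϖ^{2−q}. -/
/-!
Around `β`, the average `N` is sub-Gaussian with variance proxy `1/n`: it is the mean of `n`
independent `±1` steps, so its moment generating function is the `n`-th power of that of one
step, which Hoeffding's lemma bounds. A Chernoff-type estimate turns this into truncated moments
`E[|N - β|^k; |N - β| ≥ a] ≤ 2 a^k exp(-n a² / 2)`. Pointwise, the thresholding error
`|β̂ - β|^k` is at most `|β|^k` plus such a tail with `a = ϖ/ħ` when `|β| ≤ (1 - 1/ħ) ϖ`, and at
most `(2ϖ)^k` plus such a tail with `a = ϖ` in general. Since `n (ϖ/ħ)² / 2 = 2 log d`, the first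
tail is `O(ϖ^k / d²)`, and both cases give `E|β̂ - β|^k ≤ C |β|^q ϖ^(k-q) + 2 ϖ^k / d²`. Summing
over the `d² - 1` coefficients and using the sparsity condition gives both bounds.
-/

open MeasureTheory ProbabilityTheory

/-- The law of the average `N = 2X/n − 1` of `n` Pauli measurements, where
`X ~ Binomial(n, p)`; it is the discrete measure on `ℝ` assigning mass
`C(n,l) p^l (1−p)^{n−l}` to the point `2l/n − 1`, `l = 0, 1, …, n`. -/
noncomputable def binAvgLaw (n : ℕ) (p : ℝ) : Measure ℝ :=
  ∑ l ∈ Finset.range (n + 1),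
    (ENNReal.ofReal ((n.choose l : ℝ) * p ^ l * (1 - p) ^ (n - l))) •
      Measure.dirac (2 * (l : ℝ) / n - 1)

open Finset
open scoped NNReal

section
open Real

section binAvgLaw

variable {n : ℕ} {p : ℝ}

lemma sum_choose_mul_pow_mul_pow :
    ∑ l ∈ range (n + 1), (n.choose l : ℝ) * p ^ l * (1 - p) ^ (n - l) = 1 := by
  simpa [mul_comm, mul_assoc, mul_left_comm] using (add_pow p (1 - p) n).symm

lemma integrable_binAvgLaw (f : ℝ → ℝ) : Integrable f (binAvgLaw n p) :=
  integrable_finsetSum_measure.2 fun _ _ ↦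
    (integrable_dirac enorm_lt_top).smul_measure ENNReal.ofReal_ne_top

lemma integral_binAvgLaw (hp₀ : 0 ≤ p) (hp₁ : p ≤ 1) (f : ℝ → ℝ) :
    ∫ x, f x ∂binAvgLaw n p =
      ∑ l ∈ range (n + 1), (n.choose l : ℝ) * p ^ l * (1 - p) ^ (n - l) * f (2 * l / n - 1) := by
  have hq : 0 ≤ 1 - p := sub_nonneg.2 hp₁
  rw [binAvgLaw, integral_finsetSum_measure fun _ _ ↦
    (integrable_dirac enorm_lt_top).smul_measure ENNReal.ofReal_ne_top]
  refine sum_congr rfl fun l _ ↦ ?_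
  rw [integral_smul_measure, integral_dirac, ENNReal.toReal_ofReal (by positivity), smul_eq_mul]

lemma integral_id_binAvgLaw_one (hp₀ : 0 ≤ p) (hp₁ : p ≤ 1) :
    ∫ x, x ∂binAvgLaw 1 p = 2 * p - 1 := by
  rw [integral_binAvgLaw hp₀ hp₁]
  norm_num [sum_range_succ]
  ring

lemma mgf_binAvgLaw (hn : n ≠ 0) (hp₀ : 0 ≤ p) (hp₁ : p ≤ 1) (m t : ℝ) :
    mgf (· - m) (binAvgLaw n p) t = mgf (· - m) (binAvgLaw 1 p) (t / n) ^ n := by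
  simp only [mgf, integral_binAvgLaw hp₀ hp₁]
  rw [sum_range_succ (n := 1), sum_range_one]
  conv_rhs => rw [add_comm, add_pow]
  refine sum_congr rfl fun l hl ↦ ?_
  have hl : l ≤ n := Nat.lt_succ_iff.1 (mem_range.1 hl)
  simp only [Nat.choose_one_right, Nat.choose_zero_right, Nat.cast_one, pow_one, pow_zero,
    Nat.sub_self, Nat.sub_zero, one_mul, mul_one, Nat.cast_zero, mul_zero, mul_pow,
    ← exp_nat_mul, div_one]
  have : t * (2 * l / n - 1 - m) =
      l * (t / n * (2 - 1 - m)) + ((n - l : ℕ) : ℝ) * (t / n * (0 - 1 - m)) := by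
    rw [Nat.cast_sub hl]; field_simp; ring
  rw [this, exp_add]; ring

lemma isProbabilityMeasure_binAvgLaw (hp₀ : 0 ≤ p) (hp₁ : p ≤ 1) :
    IsProbabilityMeasure (binAvgLaw n p) := by
  have hq : 0 ≤ 1 - p := sub_nonneg.2 hp₁
  constructor
  rw [binAvgLaw, Measure.coe_finsetSum, Finset.sum_apply]
  simp only [Measure.smul_apply, measure_univ, smul_eq_mul, mul_one]
  rw [← ENNReal.ofReal_sum_of_nonneg fun _ _ ↦ by positivity, sum_choose_mul_pow_mul_pow,
    ENNReal.ofReal_one]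

lemma ae_binAvgLaw_mem_Icc : ∀ᵐ x ∂binAvgLaw n p, x ∈ Set.Icc (-1 : ℝ) 1 := by
  rw [ae_iff, binAvgLaw, Measure.coe_finsetSum, Finset.sum_apply]
  refine sum_eq_zero fun l hl ↦ ?_
  have hl : (l : ℝ) ≤ n := by exact_mod_cast Nat.lt_succ_iff.1 (mem_range.1 hl)
  rw [Measure.smul_apply, Measure.dirac_apply, Set.indicator_of_notMem, smul_zero]
  simp only [Set.mem_ofPred_eq, not_not, Set.mem_Icc]
  have h₀ : 0 ≤ 2 * (l : ℝ) / n := by positivity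
  have h₂ : 2 * (l : ℝ) / n ≤ 2 := by
    rcases (Nat.cast_nonneg n : (0 : ℝ) ≤ n).eq_or_lt with h | h
    · simp [← h]
    · rw [div_le_iff₀ h]; linarith
  constructor <;> linarith

lemma hasSubgaussianMGF_binAvgLaw_one (hp₀ : 0 ≤ p) (hp₁ : p ≤ 1) :
    HasSubgaussianMGF (· - (2 * p - 1)) 1 (binAvgLaw 1 p) := by
  have := isProbabilityMeasure_binAvgLaw (n := 1) hp₀ hp₁
  have h := hasSubgaussianMGF_of_mem_Icc (μ := binAvgLaw 1 p) aemeasurable_id ae_binAvgLaw_mem_Icc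
  simp only [id, integral_id_binAvgLaw_one hp₀ hp₁] at h
  convert h
  ext; norm_num

lemma hasSubgaussianMGF_binAvgLaw (hn : n ≠ 0) (hp₀ : 0 ≤ p) (hp₁ : p ≤ 1) :
    HasSubgaussianMGF (· - (2 * p - 1)) (n : ℝ≥0)⁻¹ (binAvgLaw n p) where
  integrable_exp_mul _ := integrable_binAvgLaw _
  mgf_le t :=
    calc mgf (· - (2 * p - 1)) (binAvgLaw n p) t
        = mgf (· - (2 * p - 1)) (binAvgLaw 1 p) (t / n) ^ n := mgf_binAvgLaw hn hp₀ hp₁ _ _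
      _ ≤ exp (1 * (t / n) ^ 2 / 2) ^ n :=
          pow_le_pow_left₀ mgf_nonneg ((hasSubgaussianMGF_binAvgLaw_one hp₀ hp₁).mgf_le _) n
      _ = exp ((n : ℝ≥0)⁻¹ * t ^ 2 / 2) := by
          rw [← exp_nat_mul]; push_cast; field_simp

lemma hasSubgaussianMGF_sub_of_map_eq_binAvgLaw {Ω : Type*} [MeasurableSpace Ω] {μ : Measure Ω}
    {N : Ω → ℝ} {β : ℝ} (hn : n ≠ 0) (hβ : |β| ≤ 1) (hN : AEMeasurable N μ)
    (hlaw : μ.map N = binAvgLaw n ((1 + β) / 2)) :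
    HasSubgaussianMGF (fun ω ↦ N ω - β) (n : ℝ≥0)⁻¹ μ := by
  obtain ⟨hβ₀, hβ₁⟩ := abs_le.1 hβ
  have h := hasSubgaussianMGF_binAvgLaw hn (p := (1 + β) / 2) (by linarith) (by linarith)
  rw [← hlaw, show 2 * ((1 + β) / 2) - 1 = β by ring] at h
  exact h.of_map hN

end binAvgLaw

lemma pow_le_pow_mul_exp {a x s : ℝ} {k : ℕ} (ha : 0 < a) (hax : a ≤ x) (hk : k ≤ s * a) :
    x ^ k ≤ a ^ k * exp (s * (x - a)) := by
  have hratio : x / a ≤ exp ((x - a) / a) := by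
    simpa [sub_div, div_self ha.ne'] using add_one_le_exp ((x - a) / a)
  have hexp : k * ((x - a) / a) ≤ s * (x - a) := by
    rw [← mul_div_assoc, div_le_iff₀ ha, mul_right_comm]
    exact mul_le_mul_of_nonneg_right hk (sub_nonneg.2 hax)
  calc x ^ k = a ^ k * (x / a) ^ k := by rw [div_pow, mul_div_cancel₀ _ (pow_ne_zero _ ha.ne')]
    _ ≤ a ^ k * exp ((x - a) / a) ^ k := by gcongr; exact div_nonneg (ha.le.trans hax) ha.le
    _ ≤ a ^ k * exp (s * (x - a)) := by rw [← exp_nat_mul]; gcongr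

lemma ite_abs_pow_le_exp {a s : ℝ} {k : ℕ} (ha : 0 < a) (hk : k ≤ s * a) (y : ℝ) :
    (if a ≤ |y| then |y| ^ k else 0) ≤ a ^ k * exp (-(s * a)) * (exp (s * y) + exp (-s * y)) := by
  have hs : 0 ≤ s := nonneg_of_mul_nonneg_left ((Nat.cast_nonneg k).trans hk) ha
  split_ifs with hy
  · calc |y| ^ k ≤ a ^ k * exp (s * (|y| - a)) := pow_le_pow_mul_exp ha hy hk
      _ = a ^ k * exp (-(s * a)) * exp (s * |y|) := by rw [mul_assoc, ← exp_add]; ring_nf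
      _ ≤ a ^ k * exp (-(s * a)) * (exp (s * y) + exp (-s * y)) := by
          gcongr
          rcases abs_cases y with ⟨h, _⟩ | ⟨h, _⟩ <;> rw [h]
          · linarith [exp_pos (-s * y)]
          · rw [mul_neg, ← neg_mul]; linarith [exp_pos (s * y)]
  · positivity

namespace ProbabilityTheory.HasSubgaussianMGF

variable {Ω : Type*} [MeasurableSpace Ω] {μ : Measure Ω} {Y : Ω → ℝ} {c : ℝ≥0} {a : ℝ} {k : ℕ}

lemma integrable_ite_abs_pow (h : HasSubgaussianMGF Y c μ) (ha : 0 < a) (k : ℕ) :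
    Integrable (fun ω ↦ if a ≤ |Y ω| then |Y ω| ^ k else 0) μ := by
  have hk : (k : ℝ) ≤ k / a * a := (div_mul_cancel₀ _ ha.ne').ge
  refine Integrable.mono' (((h.integrable_exp_mul (k / a)).add
    (h.integrable_exp_mul (-(k / a)))).const_mul (a ^ k * exp (-(k / a * a)))) ?_
    (ae_of_all _ fun ω ↦ ?_)
  · have : Measurable fun y : ℝ ↦ if a ≤ |y| then |y| ^ k else 0 :=
      Measurable.ite (measurableSet_le measurable_const measurable_abs) (by fun_prop) (by fun_prop)
    exact (this.comp_aemeasurable h.aemeasurable).aestronglyMeasurable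
  · rw [Real.norm_of_nonneg (by positivity)]
    exact ite_abs_pow_le_exp ha hk (Y ω)

lemma integral_ite_abs_pow_le (h : HasSubgaussianMGF Y c μ) (hc : 0 < c)
    (ha : 0 < a) (hk : k * c ≤ a ^ 2) :
    ∫ ω, (if a ≤ |Y ω| then |Y ω| ^ k else 0) ∂μ ≤ 2 * a ^ k * exp (-(a ^ 2 / (2 * c))) := by
  have hc' : (0 : ℝ) < c := hc
  set s : ℝ := a / c
  have hk' : (k : ℝ) ≤ s * a := by
    rw [div_mul_eq_mul_div, le_div_iff₀ hc']; linarith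
  calc ∫ ω, (if a ≤ |Y ω| then |Y ω| ^ k else 0) ∂μ
      ≤ ∫ ω, a ^ k * exp (-(s * a)) * (exp (s * Y ω) + exp (-s * Y ω)) ∂μ :=
        integral_mono (h.integrable_ite_abs_pow ha k)
          (((h.integrable_exp_mul _).add (h.integrable_exp_mul _)).const_mul _)
          fun ω ↦ ite_abs_pow_le_exp ha hk' (Y ω)
    _ = a ^ k * exp (-(s * a)) * (mgf Y μ s + mgf Y μ (-s)) := by
        rw [integral_const_mul, integral_add (h.integrable_exp_mul _) (h.integrable_exp_mul _)]
        rfl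
    _ ≤ a ^ k * exp (-(s * a)) * (exp (c * s ^ 2 / 2) + exp (c * (-s) ^ 2 / 2)) := by
        gcongr <;> exact h.mgf_le _
    _ = 2 * a ^ k * exp (-(s * a) + c * s ^ 2 / 2) := by rw [neg_sq, exp_add]; ring
    _ = 2 * a ^ k * exp (-(a ^ 2 / (2 * c))) := by congr 2; simp only [s]; field_simp; ring

end ProbabilityTheory.HasSubgaussianMGF

noncomputable def hardThreshold (ϖ x : ℝ) : ℝ := if ϖ ≤ |x| then x else 0

section hardThreshold

variable {β ϖ a x : ℝ}

lemma abs_hardThreshold_sub_pow_le_of_abs_add_le (k : ℕ) (h : |β| + a ≤ ϖ) :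
    |hardThreshold ϖ x - β| ^ k ≤ |β| ^ k + if a ≤ |x - β| then |x - β| ^ k else 0 := by
  have := abs_sub_abs_le_abs_sub x β
  unfold hardThreshold
  split_ifs with hx hxβ hxβ
  · exact le_add_of_nonneg_left (by positivity)
  · linarith
  · rw [zero_sub, abs_neg]; exact le_add_of_nonneg_right (by positivity)
  · rw [zero_sub, abs_neg, add_zero]

lemma abs_hardThreshold_sub_le (hϖ : 0 ≤ ϖ) :
    |hardThreshold ϖ x - β| ≤ 2 * ϖ ∨ ϖ ≤ |x - β| ∧ |hardThreshold ϖ x - β| ≤ 2 * |x - β| := by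
  have := abs_sub_abs_le_abs_sub β x
  rw [abs_sub_comm β x] at this
  unfold hardThreshold
  by_cases hxβ : ϖ ≤ |x - β|
  · split_ifs
    · exact .inr ⟨hxβ, by linarith [abs_nonneg (x - β)]⟩
    · rw [zero_sub, abs_neg]
      by_cases hβ : |β| ≤ 2 * ϖ
      · exact .inl hβ
      -- killed although `|β| > 2ϖ`, so `|x - β| ≥ |β| - |x| > |β| - ϖ ≥ |β| / 2`
      · exact .inr ⟨hxβ, by linarith⟩
  · refine .inl ?_
    split_ifs with hx
    · linarith
    · rw [zero_sub, abs_neg]; linarith [not_le.1 hx, not_le.1 hxβ]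

lemma abs_hardThreshold_sub_pow_le (k : ℕ) (hϖ : 0 ≤ ϖ) :
    |hardThreshold ϖ x - β| ^ k ≤
      (2 * ϖ) ^ k + 2 ^ k * if ϖ ≤ |x - β| then |x - β| ^ k else 0 := by
  rcases abs_hardThreshold_sub_le (x := x) (β := β) hϖ with h | ⟨hxβ, h⟩
  · calc _ ≤ (2 * ϖ) ^ k := by gcongr
      _ ≤ _ := le_add_of_nonneg_right (by positivity)
  · rw [if_pos hxβ, ← mul_pow]
    calc _ ≤ (2 * |x - β|) ^ k := by gcongr
      _ ≤ _ := le_add_of_nonneg_left (by positivity)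

end hardThreshold

section risk

variable {Ω : Type*} [MeasurableSpace Ω] {μ : Measure Ω} [IsProbabilityMeasure μ] {X : Ω → ℝ}
  {β ϖ a : ℝ} {c : ℝ≥0} {k : ℕ}

lemma integral_abs_hardThreshold_sub_pow_le_of_abs_add_le
    (h : HasSubgaussianMGF (fun ω ↦ X ω - β) c μ) (hc : 0 < c) (ha : 0 < a) (hk : k * c ≤ a ^ 2)
    (hβ : |β| + a ≤ ϖ) :
    ∫ ω, |hardThreshold ϖ (X ω) - β| ^ k ∂μ ≤ |β| ^ k + 2 * a ^ k * exp (-(a ^ 2 / (2 * c))) := by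
  calc ∫ ω, |hardThreshold ϖ (X ω) - β| ^ k ∂μ
      ≤ ∫ ω, (|β| ^ k + if a ≤ |X ω - β| then |X ω - β| ^ k else 0) ∂μ :=
        integral_mono_of_nonneg (ae_of_all _ fun _ ↦ by positivity)
          ((integrable_const _).add (h.integrable_ite_abs_pow ha k))
          (ae_of_all _ fun _ ↦ abs_hardThreshold_sub_pow_le_of_abs_add_le k hβ)
    _ ≤ |β| ^ k + 2 * a ^ k * exp (-(a ^ 2 / (2 * c))) := by
        rw [integral_add (integrable_const _) (h.integrable_ite_abs_pow ha k), integral_const,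
          probReal_univ, one_smul]
        gcongr
        exact h.integral_ite_abs_pow_le hc ha hk

lemma integral_abs_hardThreshold_sub_pow_le
    (h : HasSubgaussianMGF (fun ω ↦ X ω - β) c μ) (hc : 0 < c) (hϖ : 0 < ϖ) (hk : k * c ≤ ϖ ^ 2) :
    ∫ ω, |hardThreshold ϖ (X ω) - β| ^ k ∂μ ≤ 3 * (2 * ϖ) ^ k := by
  have htail := h.integral_ite_abs_pow_le hc hϖ hk
  have hexp : exp (-(ϖ ^ 2 / (2 * c))) ≤ 1 := exp_le_one_iff.2 (neg_nonpos.2 (by positivity))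
  calc ∫ ω, |hardThreshold ϖ (X ω) - β| ^ k ∂μ
      ≤ ∫ ω, ((2 * ϖ) ^ k + 2 ^ k * if ϖ ≤ |X ω - β| then |X ω - β| ^ k else 0) ∂μ :=
        integral_mono_of_nonneg (ae_of_all _ fun _ ↦ by positivity)
          ((integrable_const _).add ((h.integrable_ite_abs_pow hϖ k).const_mul _))
          (ae_of_all _ fun _ ↦ abs_hardThreshold_sub_pow_le k hϖ.le)
    _ ≤ (2 * ϖ) ^ k + 2 ^ k * (2 * ϖ ^ k * exp (-(ϖ ^ 2 / (2 * c)))) := by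
        rw [integral_add (integrable_const _) ((h.integrable_ite_abs_pow hϖ k).const_mul _),
          integral_const, probReal_univ, one_smul, integral_const_mul]
        gcongr
    _ ≤ 3 * (2 * ϖ) ^ k := by
        rw [mul_pow]
        nlinarith [pow_pos (mul_pos two_pos hϖ) k, mul_pow 2 ϖ k]

end risk

section

variable {β ϖ q : ℝ} {k : ℕ}

lemma pow_le_ite_rpow_mul_rpow (hk : k ≠ 0) (hq : q ≤ k) (hβϖ : |β| ≤ ϖ) :
    |β| ^ k ≤ (if β = 0 then 0 else |β| ^ q) * ϖ ^ ((k : ℝ) - q) := by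
  split_ifs with hβ
  · simp [hβ, hk]
  · have hβ' : 0 < |β| := abs_pos.2 hβ
    calc |β| ^ k = |β| ^ q * |β| ^ ((k : ℝ) - q) := by
          rw [← rpow_add hβ', add_sub_cancel, rpow_natCast]
      _ ≤ |β| ^ q * ϖ ^ ((k : ℝ) - q) := by gcongr

lemma pow_le_rpow_mul_rpow_of_mul_le {r : ℝ} (hq : 0 ≤ q) (hr : 0 < r) (hϖ : 0 < ϖ)
    (hβ : r * ϖ ≤ |β|) : ϖ ^ k ≤ r ^ (-q) * |β| ^ q * ϖ ^ ((k : ℝ) - q) := by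
  calc ϖ ^ k = r ^ (-q) * (r * ϖ) ^ q * ϖ ^ ((k : ℝ) - q) := by
        rw [mul_rpow hr.le hϖ.le, ← mul_assoc, ← rpow_add hr, neg_add_cancel, rpow_zero, one_mul,
          ← rpow_add hϖ, add_sub_cancel, rpow_natCast]
    _ ≤ r ^ (-q) * |β| ^ q * ϖ ^ ((k : ℝ) - q) := by gcongr

end

lemma integral_abs_hardThreshold_sub_pow_le_sparse {Ω : Type*} [MeasurableSpace Ω] {μ : Measure Ω}
    [IsProbabilityMeasure μ] {X : Ω → ℝ} {β ϖ q hbar : ℝ} {c : ℝ≥0} {k : ℕ}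
    (h : HasSubgaussianMGF (fun ω ↦ X ω - β) c μ) (hc : 0 < c) (hhbar : 1 < hbar) (hϖ : 0 < ϖ)
    (hk : k ≠ 0) (hq₀ : 0 ≤ q) (hqk : q ≤ k) (hkc : k * (c : ℝ) ≤ (ϖ / hbar) ^ 2) :
    ∫ ω, |hardThreshold ϖ (X ω) - β| ^ k ∂μ ≤
      3 * 2 ^ k * (1 - hbar⁻¹) ^ (-q) * (if β = 0 then 0 else |β| ^ q) * ϖ ^ ((k : ℝ) - q) +
        2 * ϖ ^ k * exp (-((ϖ / hbar) ^ 2 / (2 * c))) := by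
  set r := 1 - hbar⁻¹
  have hr₀ : 0 < r := sub_pos.2 (inv_lt_one_of_one_lt₀ hhbar)
  have hr₁ : r ≤ 1 := sub_le_self _ (inv_nonneg.2 (by linarith))
  have hK : 1 ≤ 3 * 2 ^ k * r ^ (-q) := by
    have := one_le_rpow_of_pos_of_le_one_of_nonpos hr₀ hr₁ (neg_nonpos.2 hq₀)
    nlinarith [one_le_pow₀ (M₀ := ℝ) one_le_two (n := k)]
  have ha : 0 < ϖ / hbar := div_pos hϖ (by linarith)
  have haϖ : ϖ / hbar ≤ ϖ := div_le_self hϖ.le hhbar.le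
  have hexp : 0 ≤ 2 * ϖ ^ k * exp (-((ϖ / hbar) ^ 2 / (2 * c))) := by positivity
  by_cases hβ : |β| ≤ r * ϖ
  · have hsmall : |β| + ϖ / hbar ≤ ϖ := by
      have : r * ϖ = ϖ - ϖ / hbar := by simp only [r]; ring
      linarith
    calc _ ≤ |β| ^ k + 2 * (ϖ / hbar) ^ k * exp (-((ϖ / hbar) ^ 2 / (2 * c))) :=
          integral_abs_hardThreshold_sub_pow_le_of_abs_add_le h hc ha hkc hsmall
      _ ≤ (if β = 0 then 0 else |β| ^ q) * ϖ ^ ((k : ℝ) - q) +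
            2 * ϖ ^ k * exp (-((ϖ / hbar) ^ 2 / (2 * c))) := by
          gcongr
          exact pow_le_ite_rpow_mul_rpow hk hqk (hβ.trans (by nlinarith))
      _ ≤ _ := by
          gcongr
          exact le_mul_of_one_le_left (by positivity) hK
  · have hβ0 : β ≠ 0 := by rintro rfl; simp at hβ; nlinarith
    rw [if_neg hβ0]
    calc _ ≤ 3 * (2 * ϖ) ^ k :=
          integral_abs_hardThreshold_sub_pow_le h hc hϖ (hkc.trans (by gcongr))
      _ ≤ 3 * 2 ^ k * (r ^ (-q) * |β| ^ q * ϖ ^ ((k : ℝ) - q)) := by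
          rw [mul_pow, mul_assoc]
          gcongr
          exact pow_le_rpow_mul_rpow_of_mul_le hq₀ hr₀ hϖ (not_le.1 hβ).le
      _ ≤ _ := by rw [← mul_assoc, ← mul_assoc]; exact le_add_of_nonneg_right hexp

end

lemma sum_integral_abs_hardThreshold_sub_pow_le {ι Ω : Type*} [Fintype ι] [MeasurableSpace Ω]
    {μ : Measure Ω} [IsProbabilityMeasure μ] {N : ι → Ω → ℝ} {β : ι → ℝ} {ϖ q hbar π : ℝ}
    {c : ℝ≥0} {k : ℕ} (h : ∀ j, HasSubgaussianMGF (fun ω ↦ N j ω - β j) c μ) (hc : 0 < c)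
    (hhbar : 1 < hbar) (hϖ₀ : 0 < ϖ) (hϖ₁ : ϖ ≤ 1) (hk : k ≠ 0) (hq₀ : 0 ≤ q) (hqk : q ≤ k)
    (hkc : k * (c : ℝ) ≤ (ϖ / hbar) ^ 2)
    (hcard : Fintype.card ι * Real.exp (-((ϖ / hbar) ^ 2 / (2 * c))) ≤ 1) (hπ : 1 ≤ π)
    (hβ : ∑ j, (if β j = 0 then 0 else |β j| ^ q) ≤ π) :
    ∑ j, ∫ ω, |hardThreshold ϖ (N j ω) - β j| ^ k ∂μ ≤
      (3 * 2 ^ k * (1 - hbar⁻¹) ^ (-q) + 2) * π * ϖ ^ ((k : ℝ) - q) := by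
  set K := 3 * 2 ^ k * (1 - hbar⁻¹) ^ (-q)
  set E := Real.exp (-((ϖ / hbar) ^ 2 / (2 * c)))
  have hK : 0 ≤ K := by
    have : 0 ≤ 1 - hbar⁻¹ := sub_nonneg.2 (inv_le_one_of_one_le₀ hhbar.le)
    positivity
  have hϖk : ϖ ^ k ≤ ϖ ^ ((k : ℝ) - q) := by
    rw [← Real.rpow_natCast]; exact Real.rpow_le_rpow_of_exponent_ge hϖ₀ hϖ₁ (by linarith)
  calc ∑ j, ∫ ω, |hardThreshold ϖ (N j ω) - β j| ^ k ∂μ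
      ≤ ∑ j, (K * (if β j = 0 then 0 else |β j| ^ q) * ϖ ^ ((k : ℝ) - q) + 2 * ϖ ^ k * E) :=
        sum_le_sum fun j _ ↦
          integral_abs_hardThreshold_sub_pow_le_sparse (h j) hc hhbar hϖ₀ hk hq₀ hqk hkc
    _ = K * ϖ ^ ((k : ℝ) - q) * ∑ j, (if β j = 0 then 0 else |β j| ^ q) +
          2 * ϖ ^ k * (Fintype.card ι * E) := by
        rw [sum_add_distrib, sum_const, card_univ, nsmul_eq_mul, mul_sum]
        congr 1
        · exact sum_congr rfl fun _ _ ↦ by ring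
        · ring
    _ ≤ K * ϖ ^ ((k : ℝ) - q) * π + 2 * ϖ ^ ((k : ℝ) - q) * 1 := by gcongr
    _ ≤ (K + 2) * π * ϖ ^ ((k : ℝ) - q) := by
        nlinarith [Real.rpow_nonneg hϖ₀.le ((k : ℝ) - q)]

lemma eventually_mul_sqrt_le_one {c₁ : ℝ} (hc₁ : c₁ < 1) (hbar : ℝ) :
    ∀ᶠ n : ℕ in Filter.atTop, ∀ L : ℝ, L ≤ (n : ℝ) ^ c₁ → hbar * Real.sqrt (4 / n * L) ≤ 1 := by
  have hpow : Filter.Tendsto (fun n : ℕ ↦ (n : ℝ) ^ (1 - c₁)) Filter.atTop Filter.atTop :=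
    (tendsto_rpow_atTop (by linarith)).comp tendsto_natCast_atTop_atTop
  filter_upwards [hpow.eventually_ge_atTop (4 * hbar ^ 2), Filter.eventually_ge_atTop 1]
    with n hn hn₁ L hL
  have hn₀ : (0 : ℝ) < n := by exact_mod_cast hn₁
  rcases le_or_gt hbar 0 with hbar₀ | hbar₀
  · exact (mul_nonpos_of_nonpos_of_nonneg hbar₀ (Real.sqrt_nonneg _)).trans zero_le_one
  rw [← Real.sqrt_sq hbar₀.le, ← Real.sqrt_mul (sq_nonneg _), Real.sqrt_le_one]
  calc hbar ^ 2 * (4 / n * L) = 4 * hbar ^ 2 * L / n := by ring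
    _ ≤ 4 * hbar ^ 2 * (n : ℝ) ^ c₁ / n := by gcongr
    _ ≤ (n : ℝ) ^ (1 - c₁) * (n : ℝ) ^ c₁ / n := by gcongr
    _ = 1 := by rw [← Real.rpow_add hn₀, sub_add_cancel, Real.rpow_one, div_self hn₀.ne']

lemma sum_integral_abs_hardThreshold_sub_pow_le_of_binAvgLaw {ι Ω : Type*} [Fintype ι]
    [MeasurableSpace Ω] {μ : Measure Ω} [IsProbabilityMeasure μ] {N : ι → Ω → ℝ} {β : ι → ℝ}
    {q hbar π : ℝ} {n b k : ℕ} (hn : n ≠ 0) (hb : b ≠ 0) (hcard : Fintype.card ι ≤ 4 ^ b)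
    (hk₀ : k ≠ 0) (hk₂ : k ≤ 2) (hq₀ : 0 ≤ q) (hq₁ : q ≤ 1) (hhbar : 1 < hbar)
    (hϖ₁ : hbar * Real.sqrt (4 / n * Real.log (2 ^ b)) ≤ 1) (hπ : 1 ≤ π)
    (hβ₁ : ∀ j, |β j| ≤ 1) (hβ : ∑ j, (if β j = 0 then 0 else |β j| ^ q) ≤ π)
    (hN : ∀ j, Measurable (N j)) (hlaw : ∀ j, μ.map (N j) = binAvgLaw n ((1 + β j) / 2)) :
    ∑ j, ∫ ω, |hardThreshold (hbar * Real.sqrt (4 / n * Real.log (2 ^ b))) (N j ω) - β j| ^ k ∂μ ≤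
      (3 * 2 ^ k * (1 - hbar⁻¹) ^ (-q) + 2) * π *
        (hbar * Real.sqrt (4 / n * Real.log (2 ^ b))) ^ ((k : ℝ) - q) := by
  set L := Real.log (2 ^ b)
  have hn' : (0 : ℝ) < n := by positivity
  have hL : (1 : ℝ) / 2 ≤ L := by
    have : (1 : ℝ) ≤ b := by exact_mod_cast Nat.one_le_iff_ne_zero.2 hb
    simp only [L, Real.log_pow]; nlinarith [Real.log_two_gt_d9]
  have hratio : (hbar * Real.sqrt (4 / n * L) / hbar) ^ 2 = 4 / n * L := by
    rw [mul_div_cancel_left₀ _ (by linarith), Real.sq_sqrt (by positivity)]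
  refine sum_integral_abs_hardThreshold_sub_pow_le (fun j ↦ ?_)
    (inv_pos.2 (Nat.cast_pos.2 (Nat.pos_of_ne_zero hn))) hhbar
    (mul_pos (by linarith) (Real.sqrt_pos.2 (by positivity))) hϖ₁ hk₀ hq₀
    (hq₁.trans (by exact_mod_cast Nat.one_le_iff_ne_zero.2 hk₀)) ?_ ?_ hπ hβ
  · exact hasSubgaussianMGF_sub_of_map_eq_binAvgLaw hn (hβ₁ j) (hN j).aemeasurable (hlaw j)
  · rw [hratio, NNReal.coe_inv, NNReal.coe_natCast, ← div_eq_mul_inv, div_mul_eq_mul_div,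
      div_le_div_iff_of_pos_right hn']
    have : (k : ℝ) ≤ 2 := by exact_mod_cast hk₂
    linarith
  · have hexp : Real.exp (2 * L) = 4 ^ b := by
      rw [two_mul, Real.exp_add, Real.exp_log (by positivity), ← mul_pow]; norm_num
    rw [hratio, NNReal.coe_inv, NNReal.coe_natCast,
      show 4 / n * L / (2 * (n : ℝ)⁻¹) = 2 * L by field_simp; ring, Real.exp_neg, hexp,
      ← div_eq_mul_inv, div_le_one (by positivity)]
    exact_mod_cast hcard

theorem hard_threshold_coefficient_risk_bounds_general
    (q hbar c₀ c₁ : ℝ) (hq0 : 0 ≤ q) (hq1 : q < 1) (hhbar : 1 < hbar)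
    (hc₁ : c₁ < 1) :
    ∃ C₁ C₂ : ℝ, 0 < C₁ ∧ 0 < C₂ ∧ ∃ n₀ : ℕ, ∀ n : ℕ, n₀ ≤ n →
    ∀ b : ℕ, 1 ≤ b → ((n : ℝ) ^ c₀ ≤ (2 : ℝ) ^ b) →
      ((2 : ℝ) ^ b ≤ Real.exp ((n : ℝ) ^ c₁)) →
    ∀ π : ℝ, 1 ≤ π →
    ∀ β : {ℓ : Fin b → Fin 4 // ℓ ≠ fun _ => 0} → ℝ,
      (∀ j, |β j| ≤ 1) →
      (∑ j, (if β j = 0 then (0 : ℝ) else |β j| ^ q)) ≤ π →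
    ∀ (Ω : Type) (_ : MeasureSpace Ω), IsProbabilityMeasure (volume : Measure Ω) →
    ∀ N : {ℓ : Fin b → Fin 4 // ℓ ≠ fun _ => 0} → Ω → ℝ,
      (∀ j, Measurable (N j)) →
      iIndepFun N (volume : Measure Ω) →
      (∀ j, Measure.map (N j) (volume : Measure Ω) = binAvgLaw n ((1 + β j) / 2)) →
    (∑ j, ∫ ω, |(if hbar * Real.sqrt (4 / n * Real.log (2 ^ b)) ≤ |N j ω|
          then N j ω else 0) - β j|)
      ≤ C₁ * π * (hbar * Real.sqrt (4 / n * Real.log (2 ^ b))) ^ (1 - q) ∧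
    (∑ j, ∫ ω, ((if hbar * Real.sqrt (4 / n * Real.log (2 ^ b)) ≤ |N j ω|
          then N j ω else 0) - β j) ^ 2)
      ≤ C₂ * π * (hbar * Real.sqrt (4 / n * Real.log (2 ^ b))) ^ (2 - q) := by
  have hr : 0 < 1 - hbar⁻¹ := sub_pos.2 (inv_lt_one_of_one_lt₀ hhbar)
  have hC (k : ℕ) : 0 < 3 * 2 ^ k * (1 - hbar⁻¹) ^ (-q) + 2 := by
    have := Real.rpow_pos_of_pos hr (-q); positivity
  obtain ⟨n₀, hn₀⟩ := Filter.eventually_atTop.1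
    ((eventually_mul_sqrt_le_one hc₁ hbar).and (Filter.eventually_ge_atTop 1))
  refine ⟨_, _, hC 1, hC 2, n₀, fun n hn b hb _ hupper π hπ β hβ₁ hβ Ω _ _ N hN _ hlaw ↦ ?_⟩
  obtain ⟨hϖ, hn₁⟩ := hn₀ n hn
  have hcard : Fintype.card {ℓ : Fin b → Fin 4 // ℓ ≠ fun _ => 0} ≤ 4 ^ b :=
    (Fintype.card_subtype_le _).trans (by simp)
  have key (k : ℕ) (hk₀ : k ≠ 0) (hk₂ : k ≤ 2) :=
    sum_integral_abs_hardThreshold_sub_pow_le_of_binAvgLaw (μ := volume) (by omega) (by omega)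
      hcard hk₀ hk₂ hq0 hq1.le hhbar
      (hϖ _ ((Real.log_le_iff_le_exp (by positivity)).2 hupper)) hπ hβ₁ hβ hN hlaw
  exact ⟨by simpa [hardThreshold] using key 1 one_ne_zero one_le_two,
    by simpa [hardThreshold, sq_abs] using key 2 two_ne_zero le_rfl⟩

/-- key risk bounds for the hard-threshold estimates of the Pauli
coefficients.  Fix `0 ≤ q < 1`, `ħ > 1`, `c₀ > 0`, `c₁ < 1`.  There are constants
`C₁, C₂ > 0` and `n₀` such that for all `n ≥ n₀` and `d = 2^b` with
`n^{c₀} ≤ d ≤ exp(n^{c₁})`: whenever `β_j ∈ [−1,1]` (indexed by the `d² − 1`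
non-identity Pauli multi-indices) satisfy the sparsity condition
`Σ_j |β_j|^q ≤ π_n(d)`, and `N_j` are independent with
`n(N_j + 1)/2 ~ Binomial(n, (1+β_j)/2)`, the hard-threshold estimates
`β̂_j = N_j·1(|N_j| ≥ ϖ)` with `ϖ = ħ√((4/n) log d)` satisfy
`Σ_j E|β̂_j − β_j| ≤ C₁ π_n(d) ϖ^{1−q}` and
`Σ_j E[(β̂_j − β_j)²] ≤ C₂ π_n(d) ϖ^{2−q}`. -/
theorem hard_threshold_coefficient_risk_bounds
    (q hbar c₀ c₁ : ℝ) (hq0 : 0 ≤ q) (hq1 : q < 1) (hhbar : 1 < hbar)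
    (hc₀ : 0 < c₀) (hc₁ : c₁ < 1) :
    ∃ C₁ C₂ : ℝ, 0 < C₁ ∧ 0 < C₂ ∧ ∃ n₀ : ℕ, ∀ n : ℕ, n₀ ≤ n →
    ∀ b : ℕ, 1 ≤ b → ((n : ℝ) ^ c₀ ≤ (2 : ℝ) ^ b) →
      ((2 : ℝ) ^ b ≤ Real.exp ((n : ℝ) ^ c₁)) →
    ∀ π : ℝ, 1 ≤ π →
    ∀ β : {ℓ : Fin b → Fin 4 // ℓ ≠ fun _ => 0} → ℝ,
      (∀ j, |β j| ≤ 1) →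
      (∑ j, (if β j = 0 then (0 : ℝ) else |β j| ^ q)) ≤ π →
    ∀ (Ω : Type) (_ : MeasureSpace Ω), IsProbabilityMeasure (volume : Measure Ω) →
    ∀ N : {ℓ : Fin b → Fin 4 // ℓ ≠ fun _ => 0} → Ω → ℝ,
      (∀ j, Measurable (N j)) →
      iIndepFun N (volume : Measure Ω) →
      (∀ j, Measure.map (N j) (volume : Measure Ω) = binAvgLaw n ((1 + β j) / 2)) →
    (∑ j, ∫ ω, |(if hbar * Real.sqrt (4 / n * Real.log (2 ^ b)) ≤ |N j ω|
          then N j ω else 0) - β j|)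
      ≤ C₁ * π * (hbar * Real.sqrt (4 / n * Real.log (2 ^ b))) ^ (1 - q) ∧
    (∑ j, ∫ ω, ((if hbar * Real.sqrt (4 / n * Real.log (2 ^ b)) ≤ |N j ω|
          then N j ω else 0) - β j) ^ 2)
      ≤ C₂ * π * (hbar * Real.sqrt (4 / n * Real.log (2 ^ b))) ^ (2 - q) :=
  hard_threshold_coefficient_risk_bounds_general q hbar c₀ c₁ hq0 hq1 hhbar hc₁
end

section
/- Let d, K, j be positive integers with 1 ≤ j ≤ K and 2K ≤ d − 1. Then C(K, j) · C(d−1−K, K−j) / C(d−1, K) ≤ ( K² / (d − K) )^j, where C(m, r) denotes the binomial coefficient. -/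
/-!
Write `n = d - 1`. Since `n - K ≤ n - j`, it suffices to bound `C(K, j) · C(n - j, K - j) / C(n, K)`,
and the identity `C(n, K) C(K, j) = C(n, j) C(n - j, K - j)` turns this into `C(K, j)² / C(n, j)`.
Termwise, `C(K, j) / C(n, j) = ∏_{i < j} (K - i) / (n - i) ≤ (K / n)^j` and `C(K, j) ≤ K^j`, which gives
`(K² / n)^j`; finally `d - K ≤ n` as soon as `K ≥ 1`.
-/

namespace Nat

theorem descFactorial_mul_pow_le_descFactorial_mul_pow {K n : ℕ} (hKn : K ≤ n) (j : ℕ) :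
    K.descFactorial j * n ^ j ≤ n.descFactorial j * K ^ j := by
  induction j with
  | zero => simp
  | succ j ih =>
    have hstep : (K - j) * n ≤ (n - j) * K := by
      rw [Nat.sub_mul, Nat.sub_mul, Nat.mul_comm K n]
      exact Nat.sub_le_sub_left (Nat.mul_le_mul_left j hKn) _
    calc K.descFactorial (j + 1) * n ^ (j + 1)
        = ((K - j) * n) * (K.descFactorial j * n ^ j) := by rw [descFactorial_succ]; ring
      _ ≤ ((n - j) * K) * (n.descFactorial j * K ^ j) := Nat.mul_le_mul hstep ih
      _ = n.descFactorial (j + 1) * K ^ (j + 1) := by rw [descFactorial_succ]; ring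

theorem choose_mul_pow_le_choose_mul_pow {K n : ℕ} (hKn : K ≤ n) (j : ℕ) :
    K.choose j * n ^ j ≤ n.choose j * K ^ j := by
  have h := descFactorial_mul_pow_le_descFactorial_mul_pow hKn j
  rw [descFactorial_eq_factorial_mul_choose, descFactorial_eq_factorial_mul_choose,
    Nat.mul_assoc, Nat.mul_assoc] at h
  exact Nat.le_of_mul_le_mul_left h (factorial_pos j)

theorem choose_sub_mul_pow_le_choose_mul_pow {j K n : ℕ} (hjK : j ≤ K) (hKn : K ≤ n) :
    (n - j).choose (K - j) * n ^ j ≤ n.choose K * K ^ j := by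
  refine Nat.le_of_mul_le_mul_left ?_ (choose_pos (hjK.trans hKn))
  calc n.choose j * ((n - j).choose (K - j) * n ^ j)
      = n.choose K * (K.choose j * n ^ j) := by rw [← Nat.mul_assoc, ← choose_mul hjK]; ring
    _ ≤ n.choose K * (n.choose j * K ^ j) :=
        Nat.mul_le_mul_left _ (choose_mul_pow_le_choose_mul_pow hKn j)
    _ = n.choose j * (n.choose K * K ^ j) := by ring

end Nat

/-- hypergeometric ratio bound used in the Le Cam lower-bound
argument. For positive integers `d, K, j` with `1 ≤ j ≤ K` and `2K ≤ d − 1`,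
`C(K, j) · C(d−1−K, K−j) / C(d−1, K) ≤ (K² / (d − K))^j`. -/
theorem choose_ratio_le (d K j : ℕ) (hj1 : 1 ≤ j) (hjK : j ≤ K)
    (hKd : 2 * K ≤ d - 1) :
    ((K.choose j : ℝ) * ((d - 1 - K).choose (K - j) : ℝ)) / ((d - 1).choose K : ℝ)
      ≤ ((K : ℝ) ^ 2 / ((d : ℝ) - (K : ℝ))) ^ j := by
  have hKn : K ≤ d - 1 := by omega
  have hK : 1 ≤ K := hj1.trans hjK
  have key : K.choose j * (d - 1 - K).choose (K - j) * (d - K) ^ j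
      ≤ (K ^ 2) ^ j * (d - 1).choose K :=
    calc K.choose j * (d - 1 - K).choose (K - j) * (d - K) ^ j
        ≤ K ^ j * ((d - 1 - j).choose (K - j) * (d - 1) ^ j) := by
          rw [Nat.mul_assoc]
          exact Nat.mul_le_mul (Nat.choose_le_pow K j) <| Nat.mul_le_mul
            (Nat.choose_le_choose _ (by omega)) (Nat.pow_le_pow_left (by omega) j)
      _ ≤ K ^ j * ((d - 1).choose K * K ^ j) :=
          Nat.mul_le_mul_left _ (Nat.choose_sub_mul_pow_le_choose_mul_pow hjK hKn)
      _ = (K ^ 2) ^ j * (d - 1).choose K := by ring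
  have hchoose : (0 : ℝ) < (d - 1).choose K := mod_cast Nat.choose_pos hKn
  have hdK : (0 : ℝ) < d - K := by
    rw [sub_pos]
    exact_mod_cast (show K < d by omega)
  rw [div_pow, div_le_div_iff₀ hchoose (pow_pos hdK j)]
  have hcast : ((d - K : ℕ) : ℝ) = d - K := Nat.cast_sub (by omega)
  rw [← hcast]
  exact_mod_cast key
end
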